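/- For a nearest-neighbour random walk on ℤ in a fixed environment ω, transient to +∞, the expected hitting time of a+1 starting from a satisfies E_{a,ω}[τ(a+1)] = 1 + 2 Σ_{i<a} e^{V(a)-V(i)}, provided this sum is finite. -/

import Mathlib

/-!
Multiplying by the weight `e^{-V}` turns the recursion `w y = 1 + (1 - ω y) (w (y-1) + w y)` into
`e^{-V y} (w y - 1) = e^{-V (y-1)} (w (y-1) + 1)`, so any two solutions differ by a constant
multiple of `e^V`. The candidate `1 + 2 e^{V y} ∑_{i<y} e^{-V i}` is a solution, and its weighted
value tends to `0` as `y → -∞` because the series converges. Hence every nonnegative solution lies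
above the candidate, while minimality puts `u` below it.
-/

open Real Filter Topology

def natEquivIio (a : ℤ) : ℕ ≃ {i : ℤ // i < a} where
  toFun n := ⟨a - 1 - n, by omega⟩
  invFun i := (a - 1 - i).toNat
  left_inv n := by simp only; omega
  right_inv i := Subtype.ext (by have := i.2; simp only; omega)

section TailSums

variable {G : Type*} [AddCommGroup G] [TopologicalSpace G] {g : ℤ → G}

theorem tsum_Iio_eq_tsum_nat (a : ℤ) :
    ∑' i : {i : ℤ // i < a}, g i = ∑' n : ℕ, g (a - 1 - n) :=
  ((natEquivIio a).tsum_eq fun i => g i).symm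

theorem summable_Iio_iff_summable_nat (a : ℤ) :
    (Summable fun i : {i : ℤ // i < a} => g i) ↔ Summable fun n : ℕ => g (a - 1 - n) :=
  (natEquivIio a).summable_iff.symm

variable [IsTopologicalAddGroup G]

theorem summable_sub_natCast_sub_iff (b : ℤ) (k : ℕ) :
    (Summable fun n : ℕ => g (b - k - n)) ↔ Summable fun n : ℕ => g (b - n) := by
  have h (n : ℕ) : b - k - n = b - ↑(n + k) := by push_cast; ring
  simpa only [h] using summable_nat_add_iff (f := fun n : ℕ => g (b - n)) k

theorem Summable.comp_sub_natCast {a : ℤ} (h : Summable fun n : ℕ => g (a - n)) (b : ℤ) :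
    Summable fun n : ℕ => g (b - n) := by
  obtain ⟨k, hk⟩ := Int.eq_ofNat_of_zero_le (sub_nonneg.2 (le_max_left a b))
  obtain ⟨l, hl⟩ := Int.eq_ofNat_of_zero_le (sub_nonneg.2 (le_max_right a b))
  have ha : a = max a b - k := by omega
  have hb : b = max a b - l := by omega
  rw [ha, summable_sub_natCast_sub_iff] at h
  rwa [hb, summable_sub_natCast_sub_iff]

variable [T2Space G]

theorem Summable.tsum_sub_natCast_eq_add {b : ℤ} (h : Summable fun n : ℕ => g (b - n)) :
    ∑' n : ℕ, g (b - n) = g b + ∑' n : ℕ, g (b - 1 - n) := by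
  rw [h.tsum_eq_zero_add]
  congr 1
  · simp
  · exact tsum_congr fun n => by push_cast; ring_nf

theorem tendsto_tsum_sub_natCast_sub (a : ℤ) :
    Tendsto (fun m : ℕ => ∑' n : ℕ, g (a - m - n)) atTop (𝓝 0) := by
  have h (m n : ℕ) : a - m - n = a - ↑(n + m) := by push_cast; ring
  simpa only [h] using tendsto_sum_nat_add fun n : ℕ => g (a - n)

end TailSums

def SolvesHittingRecursion (ω w : ℤ → ℝ) : Prop :=
  ∀ y, w y = 1 + (1 - ω y) * (w (y - 1) + w y)

noncomputable def expectedHittingTime (V : ℤ → ℝ) (y : ℤ) : ℝ :=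
  1 + 2 * exp (V y) * ∑' n : ℕ, exp (-V (y - 1 - n))

section Recursion

variable {ω V : ℤ → ℝ}

theorem hittingRecursion_iff {y : ℤ} (hωy : 0 < ω y ∧ ω y < 1)
    (hVy : V y - V (y - 1) = log ((1 - ω y) / ω y)) (w : ℤ → ℝ) :
    w y = 1 + (1 - ω y) * (w (y - 1) + w y) ↔
      exp (-V y) * (w y - 1) = exp (-V (y - 1)) * (w (y - 1) + 1) := by
  have hρ : exp (-V (y - 1)) = exp (-V y) * ((1 - ω y) / ω y) := by
    rw [← exp_log (div_pos (by linarith) hωy.1), ← hVy, ← exp_add]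
    ring_nf
  rw [hρ, mul_assoc, mul_right_inj' (exp_pos _).ne']
  field_simp [hωy.1.ne']
  constructor <;> intro h <;> linarith

theorem exp_neg_mul_sub_eq_of_solves (hω : ∀ y, 0 < ω y ∧ ω y < 1)
    (hV : ∀ x, V x - V (x - 1) = log ((1 - ω x) / ω x)) {u w : ℤ → ℝ}
    (hu : SolvesHittingRecursion ω u) (hw : SolvesHittingRecursion ω w) (y a : ℤ) :
    exp (-V y) * (u y - w y) = exp (-V a) * (u a - w a) := by
  set d : ℤ → ℝ := fun y => exp (-V y) * (u y - w y)
  have hd : Function.Periodic d 1 := fun x => by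
    have hux := (hittingRecursion_iff (hω (x + 1)) (hV (x + 1)) u).1 (hu (x + 1))
    have hwx := (hittingRecursion_iff (hω (x + 1)) (hV (x + 1)) w).1 (hw (x + 1))
    simp only [add_sub_cancel_right] at hux hwx
    simp only [d]
    linear_combination hux - hwx
  simpa [d] using (hd.int_mul_eq y).trans (hd.int_mul_eq a).symm

theorem expectedHittingTime_nonneg (V : ℤ → ℝ) (y : ℤ) : 0 ≤ expectedHittingTime V y := by
  have : 0 ≤ ∑' n : ℕ, exp (-V (y - 1 - n)) := tsum_nonneg fun n => (exp_pos _).le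
  unfold expectedHittingTime
  positivity

theorem exp_neg_mul_expectedHittingTime (V : ℤ → ℝ) (y : ℤ) :
    exp (-V y) * expectedHittingTime V y = exp (-V y) + 2 * ∑' n : ℕ, exp (-V (y - 1 - n)) := by
  rw [expectedHittingTime, exp_neg]
  field_simp

theorem solvesHittingRecursion_expectedHittingTime (hω : ∀ y, 0 < ω y ∧ ω y < 1)
    (hV : ∀ x, V x - V (x - 1) = log ((1 - ω x) / ω x)) {a : ℤ}
    (hg : Summable fun n : ℕ => exp (-V (a - n))) :
    SolvesHittingRecursion ω (expectedHittingTime V) := by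
  intro y
  have htail := Summable.tsum_sub_natCast_eq_add (g := fun i => exp (-V i))
    (Summable.comp_sub_natCast (g := fun i => exp (-V i)) hg (y - 1))
  rw [hittingRecursion_iff (hω y) (hV y), mul_sub, mul_add, exp_neg_mul_expectedHittingTime,
    exp_neg_mul_expectedHittingTime, htail]
  ring

theorem tendsto_exp_neg_mul_expectedHittingTime {a : ℤ}
    (hg : Summable fun n : ℕ => exp (-V (a - n))) :
    Tendsto (fun m : ℕ => exp (-V (a - m)) * expectedHittingTime V (a - m)) atTop (𝓝 0) := by
  simp only [exp_neg_mul_expectedHittingTime, sub_right_comm a _ (1 : ℤ)]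
  simpa using hg.tendsto_atTop_zero.add
    ((tendsto_tsum_sub_natCast_sub (g := fun i => exp (-V i)) (a - 1)).const_mul 2)

theorem expectedHittingTime_le_of_solves (hω : ∀ y, 0 < ω y ∧ ω y < 1)
    (hV : ∀ x, V x - V (x - 1) = log ((1 - ω x) / ω x)) {u : ℤ → ℝ} (hu0 : ∀ y, 0 ≤ u y)
    (hu : SolvesHittingRecursion ω u) {a : ℤ} (hg : Summable fun n : ℕ => exp (-V (a - n))) :
    expectedHittingTime V a ≤ u a := by
  have hw := solvesHittingRecursion_expectedHittingTime hω hV hg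
  have hbound (m : ℕ) : -(exp (-V (a - m)) * expectedHittingTime V (a - m)) ≤
      exp (-V a) * (u a - expectedHittingTime V a) := by
    rw [← exp_neg_mul_sub_eq_of_solves hω hV hu hw (a - m) a]
    nlinarith [mul_nonneg (exp_pos (-V (a - m))).le (hu0 (a - m))]
  have hc := le_of_tendsto (by simpa using (tendsto_exp_neg_mul_expectedHittingTime hg).neg)
    (Eventually.of_forall hbound)
  exact sub_nonneg.1 ((mul_nonneg_iff_of_pos_left (exp_pos _)).1 hc)

end Recursion

/-- `u y = E_{y,ω}[τ(y+1)]` enters through its characterization as the minimal nonnegative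
solution of the one-step recursion. -/
theorem quenched_expected_hitting_time_general
    (ω : ℤ → ℝ) (hω : ∀ y, 0 < ω y ∧ ω y < 1)
    (V : ℤ → ℝ)
    (hV : ∀ x : ℤ, V x - V (x - 1) = Real.log ((1 - ω x) / ω x))
    (u : ℤ → ℝ) (hu0 : ∀ y, 0 ≤ u y)
    (hrec : ∀ y : ℤ, u y = 1 + (1 - ω y) * (u (y - 1) + u y))
    (hmin : ∀ w : ℤ → ℝ, (∀ y, 0 ≤ w y) →
      (∀ y : ℤ, w y = 1 + (1 - ω y) * (w (y - 1) + w y)) → ∀ y, u y ≤ w y)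
    (a : ℤ)
    (hsum : Summable (fun i : {i : ℤ // i < a} => Real.exp (V a - V i))) :
    u a = 1 + 2 * ∑' i : {i : ℤ // i < a}, Real.exp (V a - V i) := by
  have hexp (i : ℤ) : exp (V a - V i) = exp (V a) * exp (-V i) := by
    rw [sub_eq_add_neg, exp_add]
  simp only [hexp] at hsum ⊢
  rw [summable_Iio_iff_summable_nat (g := fun i => exp (V a) * exp (-V i)),
    summable_mul_left_iff (exp_pos _).ne'] at hsum
  have hg : Summable fun n : ℕ => exp (-V (a - n)) :=
    Summable.comp_sub_natCast (g := fun i => exp (-V i)) hsum a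
  have hupper : u a ≤ expectedHittingTime V a :=
    hmin _ (expectedHittingTime_nonneg V)
      (solvesHittingRecursion_expectedHittingTime hω hV hg) a
  have hlower := expectedHittingTime_le_of_solves hω hV hu0 hrec hg
  have hseries : ∑' i : {i : ℤ // i < a}, exp (V a) * exp (-V i) =
      exp (V a) * ∑' n : ℕ, exp (-V (a - 1 - n)) := by
    rw [tsum_mul_left, tsum_Iio_eq_tsum_nat (g := fun i => exp (-V i))]
  rw [le_antisymm hupper hlower, hseries, expectedHittingTime, mul_assoc]

/-- Quenched expected hitting time of `a+1` from `a` for a transient-to-`+∞`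
birth-death chain on ℤ. The function `u y = E_{y,ω}[τ(y+1)]` is characterized as the
minimal nonnegative solution of the one-step recursion
`u y = 1 + (1 - ω y) * (u (y-1) + u y)`. -/
theorem quenched_expected_hitting_time
    (ω : ℤ → ℝ) (hω : ∀ y, 0 < ω y ∧ ω y < 1)
    (V : ℤ → ℝ) (hV0 : V 0 = 0)
    (hV : ∀ x : ℤ, V x - V (x - 1) = Real.log ((1 - ω x) / ω x))
    (u : ℤ → ℝ) (hu0 : ∀ y, 0 ≤ u y)
    (hrec : ∀ y : ℤ, u y = 1 + (1 - ω y) * (u (y - 1) + u y))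
    (hmin : ∀ w : ℤ → ℝ, (∀ y, 0 ≤ w y) →
      (∀ y : ℤ, w y = 1 + (1 - ω y) * (w (y - 1) + w y)) → ∀ y, u y ≤ w y)
    (a : ℤ)
    (hsum : Summable (fun i : {i : ℤ // i < a} => Real.exp (V a - V i))) :
    u a = 1 + 2 * ∑' i : {i : ℤ // i < a}, Real.exp (V a - V i) :=
  quenched_expected_hitting_time_general ω hω V hV u hu0 hrec hmin a hsum
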